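/- Let u, v : ℝ × ℝ → ℝ be smooth (C^∞) functions of (t, x) and let a, b, c, ε, κ, λ, σ be real constants with a = b, ε = 0, κ = 0, λ = 0, a ≠ 0, and suppose a·u(t,x) + c > 0 for all (t, x). If (u, v) solves the BBM-KdV system, then the vector with components C^t = (1/a)·(a·u + c)²·ln(a·u + c) + a·(v² − σ·v_x²) and C^x = (a·u + c)²·(2·ln(a·u + c) + 1)·v + 2·a·v·(2·a·v²/3 + σ·v_tx) satisfies the conservation law ∂_t C^t + ∂_x C^x = 0 at every point (t, x). -/

import Mathlib

open Real

noncomputable def pt (f : ℝ × ℝ → ℝ) : ℝ × ℝ → ℝ :=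
  fun p => deriv (fun s => f (s, p.2)) p.1

noncomputable def px (f : ℝ × ℝ → ℝ) : ℝ × ℝ → ℝ :=
  fun p => deriv (fun s => f (p.1, s)) p.2

/-- The BBM-KdV system: F1 = 0 and F2 = 0 everywhere. -/
def BBMKdV (a b c ε κ lam σ : ℝ) (u v : ℝ × ℝ → ℝ) : Prop :=
  (∀ p : ℝ × ℝ, pt u p + (a + b) * v p * px u p + (a * u p + c) * px v p
      + ε * px (px (pt u)) p + κ * px (px (px v)) p = 0) ∧
  (∀ p : ℝ × ℝ, pt v p + (b * u p + c) * px u p + (a + b) * v p * px v p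
      + lam * px (px (px u)) p + σ * px (px (pt v)) p = 0)

lemma hasDerivAt_pt {f : ℝ × ℝ → ℝ} (hf : Differentiable ℝ f) (p : ℝ × ℝ) :
    HasDerivAt (fun s => f (s, p.2)) (pt f p) p.1 := by
  have hg : DifferentiableAt ℝ (fun s : ℝ => ((s, p.2) : ℝ × ℝ)) p.1 :=
    (differentiableAt_id.prodMk (differentiableAt_const _))
  have : DifferentiableAt ℝ (fun s => f (s, p.2)) p.1 := (hf _).comp p.1 hg
  exact this.hasDerivAt

lemma hasDerivAt_px {f : ℝ × ℝ → ℝ} (hf : Differentiable ℝ f) (p : ℝ × ℝ) :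
    HasDerivAt (fun s => f (p.1, s)) (px f p) p.2 := by
  have hg : DifferentiableAt ℝ (fun s : ℝ => ((p.1, s) : ℝ × ℝ)) p.2 :=
    ((differentiableAt_const _).prodMk differentiableAt_id)
  have : DifferentiableAt ℝ (fun s => f (p.1, s)) p.2 := (hf _).comp p.2 hg
  exact this.hasDerivAt

lemma pt_eq {f : ℝ × ℝ → ℝ} (hf : Differentiable ℝ f) (p : ℝ × ℝ) :
    pt f p = fderiv ℝ f p (1, 0) := by
  have hg : HasDerivAt (fun s : ℝ => ((s, p.2) : ℝ × ℝ)) (1, 0) p.1 :=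
    (hasDerivAt_id p.1).prodMk (hasDerivAt_const _ _)
  have h : HasDerivAt (fun s => f (s, p.2)) (fderiv ℝ f (p.1, p.2) (1, 0)) p.1 :=
    (hf (p.1, p.2)).hasFDerivAt.comp_hasDerivAt p.1 hg
  rw [Prod.mk.eta] at h
  exact h.deriv

lemma px_eq {f : ℝ × ℝ → ℝ} (hf : Differentiable ℝ f) (p : ℝ × ℝ) :
    px f p = fderiv ℝ f p (0, 1) := by
  have hg : HasDerivAt (fun s : ℝ => ((p.1, s) : ℝ × ℝ)) (0, 1) p.2 :=
    (hasDerivAt_const _ _).prodMk (hasDerivAt_id p.2)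
  have h : HasDerivAt (fun s => f (p.1, s)) (fderiv ℝ f (p.1, p.2) (0, 1)) p.2 :=
    (hf (p.1, p.2)).hasFDerivAt.comp_hasDerivAt p.2 hg
  rw [Prod.mk.eta] at h
  exact h.deriv

lemma contDiff_pt {f : ℝ × ℝ → ℝ} (hf : ContDiff ℝ (⊤ : ℕ∞) f) : ContDiff ℝ (⊤ : ℕ∞) (pt f) := by
  have : pt f = fun p => fderiv ℝ f p (1, 0) := funext (pt_eq (hf.differentiable (by simp)))
  rw [this]
  exact (hf.fderiv_right (by simp)).clm_apply contDiff_const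

lemma contDiff_px {f : ℝ × ℝ → ℝ} (hf : ContDiff ℝ (⊤ : ℕ∞) f) : ContDiff ℝ (⊤ : ℕ∞) (px f) := by
  have : px f = fun p => fderiv ℝ f p (0, 1) := funext (px_eq (hf.differentiable (by simp)))
  rw [this]
  exact (hf.fderiv_right (by simp)).clm_apply contDiff_const

lemma pt_px_comm {f : ℝ × ℝ → ℝ} (hf : ContDiff ℝ (⊤ : ℕ∞) f) (p : ℝ × ℝ) :
    pt (px f) p = px (pt f) p := by
  have hfd : Differentiable ℝ f := hf.differentiable (by simp)
  have hf1 : ContDiff ℝ (⊤ : ℕ∞) (fderiv ℝ f) := hf.fderiv_right (by simp)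
  have hf1d : Differentiable ℝ (fderiv ℝ f) := hf1.differentiable (by simp)
  have hpx : px f = fun q => fderiv ℝ f q (0, 1) := funext (px_eq hfd)
  have hpt : pt f = fun q => fderiv ℝ f q (1, 0) := funext (pt_eq hfd)
  have hpxd : Differentiable ℝ (px f) := (contDiff_px hf).differentiable (by simp)
  have hptd : Differentiable ℝ (pt f) := (contDiff_pt hf).differentiable (by simp)
  have hsymm : fderiv ℝ (fderiv ℝ f) p (1, 0) (0, 1) = fderiv ℝ (fderiv ℝ f) p (0, 1) (1, 0) :=
    second_derivative_symmetric (fun y => (hfd y).hasFDerivAt) (hf1d p).hasFDerivAt _ _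
  have e1 : fderiv ℝ (fun q => fderiv ℝ f q (0, 1)) p =
      (fderiv ℝ f p).comp (fderiv ℝ (fun _ : ℝ × ℝ => ((0 : ℝ), (1 : ℝ))) p)
      + (fderiv ℝ (fderiv ℝ f) p).flip ((0 : ℝ), (1 : ℝ)) :=
    fderiv_clm_apply (hf1d p) (differentiableAt_const _)
  have e2 : fderiv ℝ (fun q => fderiv ℝ f q (1, 0)) p =
      (fderiv ℝ f p).comp (fderiv ℝ (fun _ : ℝ × ℝ => ((1 : ℝ), (0 : ℝ))) p)
      + (fderiv ℝ (fderiv ℝ f) p).flip ((1 : ℝ), (0 : ℝ)) :=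
    fderiv_clm_apply (hf1d p) (differentiableAt_const _)
  rw [pt_eq (hpx ▸ (hf1.clm_apply contDiff_const).differentiable (by simp) : Differentiable ℝ (px f)) p,
      px_eq (hpt ▸ (hf1.clm_apply contDiff_const).differentiable (by simp) : Differentiable ℝ (pt f)) p]
  rw [hpx, hpt, e1, e2]
  simp [fderiv_const, hsymm]

theorem stmt_6 (u v : ℝ × ℝ → ℝ) (hu : ContDiff ℝ (⊤ : ℕ∞) u) (hv : ContDiff ℝ (⊤ : ℕ∞) v)
    (a b c ε κ lam σ : ℝ)
    (hab : a = b) (he : ε = 0) (hk : κ = 0) (hl : lam = 0) (ha : a ≠ 0)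
    (hpos : ∀ p : ℝ × ℝ, a * u p + c > 0)
    (hsol : BBMKdV a b c ε κ lam σ u v) :
    ∀ p : ℝ × ℝ,
      pt (fun q => (1 / a) * (a * u q + c) ^ 2 * Real.log (a * u q + c) + a * (v q ^ 2 - σ * (px v q) ^ 2)) p
      + px (fun q => (a * u q + c) ^ 2 * (2 * Real.log (a * u q + c) + 1) * v q + 2 * a * v q * (2 * a * v q ^ 2 / 3 + σ * px (pt v) q)) p = 0 := by
  subst hab he hk hl
  obtain ⟨F1, F2⟩ := hsol
  intro p
  have E1 := F1 p
  have E2 := F2 p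
  have hud : Differentiable ℝ u := hu.differentiable (by simp)
  have hvd : Differentiable ℝ v := hv.differentiable (by simp)
  have hpxv : Differentiable ℝ (px v) := (contDiff_px hv).differentiable (by simp)
  have hpxptv : Differentiable ℝ (px (pt v)) :=
    (contDiff_px (contDiff_pt hv)).differentiable (by simp)
  have hUp : a * u p + c > 0 := hpos p
  have hU1 : a * u (p.1, p.2) + c ≠ 0 := by rw [Prod.mk.eta]; exact ne_of_gt hUp
  -- t-derivative of C^t
  have h1 : HasDerivAt (fun s => a * u (s, p.2) + c) (a * pt u p) p.1 :=
    ((hasDerivAt_pt hud p).const_mul a).add_const c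
  have hlog1 : HasDerivAt (fun s => Real.log (a * u (s, p.2) + c))
      ((a * pt u p) / (a * u (p.1, p.2) + c)) p.1 := h1.log hU1
  have hA := ((h1.pow 2).const_mul (1 / a)).mul hlog1
  have hB := (((hasDerivAt_pt hvd p).pow 2).sub
      (((hasDerivAt_pt hpxv p).pow 2).const_mul σ)).const_mul a
  have HT : pt (fun q => (1 / a) * (a * u q + c) ^ 2 * Real.log (a * u q + c)
        + a * (v q ^ 2 - σ * (px v q) ^ 2)) p
      = 2 * (a * u p + c) * pt u p * Real.log (a * u p + c) + (a * u p + c) * pt u p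
        + 2 * a * v p * pt v p - 2 * a * σ * px v p * pt (px v) p := by
    have h : HasDerivAt (fun s => (1 / a) * (a * u (s, p.2) + c) ^ 2
          * Real.log (a * u (s, p.2) + c)
          + a * (v (s, p.2) ^ 2 - σ * (px v (s, p.2)) ^ 2))
        (2 * (a * u p + c) * pt u p * Real.log (a * u p + c) + (a * u p + c) * pt u p
          + 2 * a * v p * pt v p - 2 * a * σ * px v p * pt (px v) p) p.1 := by
      refine (hA.add hB).congr_deriv ?_
      simp only [Pi.pow_apply, Pi.mul_apply, Pi.add_apply, Pi.sub_apply]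
      field_simp
      ring
    exact h.deriv
  -- x-derivative of C^x
  have h1x : HasDerivAt (fun s => a * u (p.1, s) + c) (a * px u p) p.2 :=
    ((hasDerivAt_px hud p).const_mul a).add_const c
  have hlogx : HasDerivAt (fun s => Real.log (a * u (p.1, s) + c))
      ((a * px u p) / (a * u (p.1, p.2) + c)) p.2 := h1x.log hU1
  have hAx := ((h1x.pow 2).mul ((hlogx.const_mul 2).add_const 1)).mul (hasDerivAt_px hvd p)
  have hBx := ((hasDerivAt_px hvd p).const_mul (2 * a)).mul
      (((((hasDerivAt_px hvd p).pow 2).const_mul (2 * a)).div_const 3).add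
        ((hasDerivAt_px hpxptv p).const_mul σ))
  have HX : px (fun q => (a * u q + c) ^ 2 * (2 * Real.log (a * u q + c) + 1) * v q
        + 2 * a * v q * (2 * a * v q ^ 2 / 3 + σ * px (pt v) q)) p
      = 4 * a * (a * u p + c) * px u p * v p * Real.log (a * u p + c)
        + 4 * a * (a * u p + c) * px u p * v p
        + (a * u p + c) ^ 2 * (2 * Real.log (a * u p + c) + 1) * px v p
        + 4 * a ^ 2 * v p ^ 2 * px v p
        + 2 * a * σ * px v p * px (pt v) p
        + 2 * a * σ * v p * px (px (pt v)) p := by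
    have h : HasDerivAt (fun s => (a * u (p.1, s) + c) ^ 2
          * (2 * Real.log (a * u (p.1, s) + c) + 1) * v (p.1, s)
          + 2 * a * v (p.1, s) * (2 * a * v (p.1, s) ^ 2 / 3 + σ * px (pt v) (p.1, s)))
        (4 * a * (a * u p + c) * px u p * v p * Real.log (a * u p + c)
          + 4 * a * (a * u p + c) * px u p * v p
          + (a * u p + c) ^ 2 * (2 * Real.log (a * u p + c) + 1) * px v p
          + 4 * a ^ 2 * v p ^ 2 * px v p
          + 2 * a * σ * px v p * px (pt v) p
          + 2 * a * σ * v p * px (px (pt v)) p) p.2 := by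
      refine (hAx.add hBx).congr_deriv ?_
      simp only [Pi.pow_apply, Pi.mul_apply, Pi.add_apply, Pi.sub_apply]
      field_simp
      ring
    exact h.deriv
  have hsym : pt (px v) p = px (pt v) p := pt_px_comm hv p
  rw [HT, HX]
  linear_combination ((a * u p + c) * (2 * Real.log (a * u p + c) + 1)) * E1
    + (2 * a * v p) * E2 + (-(2 * a * σ * px v p)) * hsym
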